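/- Let V be a finite-dimensional subspace of functions ℝ → ℝ whose elements are continuously differentiable on [0,1], let Q be a finite-dimensional subspace of functions continuous on [0,1], let a : ℝ → ℝ be continuous on [0,1], and let τ > 0 and θ ∈ ℝ. Let (uⁿ)ₙ≥₀ in V and (pⁿ)ₙ≥₀ in Q be a solution of the θ-scheme. Then for every n ≥ 1: (Eⁿ − Eⁿ⁻¹)/τ = −(θ − 1/2)·τ·(‖(uⁿ − uⁿ⁻¹)/τ‖² + ‖(pⁿ − pⁿ⁻¹)/τ‖²) − ∫₀¹ a(x)·(u^{n,θ}(x))² dx, where Eⁿ = (1/2)(‖uⁿ‖² + ‖pⁿ‖²) and u^{n,θ} = θ·uⁿ + (1−θ)·uⁿ⁻¹. -/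
import Mathlib


open MeasureTheory Set

/-- The L²(0,1) inner product `(f,g) = ∫₀¹ f g dx`. -/
noncomputable def L2ip (f g : ℝ → ℝ) : ℝ := ∫ x in (0:ℝ)..1, f x * g x

/-- The squared L²(0,1) norm `‖f‖² = ∫₀¹ f² dx`. -/
noncomputable def L2nsq (f : ℝ → ℝ) : ℝ := ∫ x in (0:ℝ)..1, (f x) ^ 2

/-- The L²(0,1) norm. -/
noncomputable def L2nrm (f : ℝ → ℝ) : ℝ := Real.sqrt (L2nsq f)

/-- The θ-average `w^{n,θ} = θ wⁿ + (1−θ) wⁿ⁻¹`. -/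
noncomputable def thAvg (θ : ℝ) (w : ℕ → ℝ → ℝ) (n : ℕ) : ℝ → ℝ :=
  fun x => θ * w n x + (1 - θ) * w (n - 1) x

/-- The backward difference quotient `∂̄wⁿ = (wⁿ − wⁿ⁻¹)/τ`. -/
noncomputable def bdiff (τ : ℝ) (w : ℕ → ℝ → ℝ) (n : ℕ) : ℝ → ℝ :=
  fun x => (w n x - w (n - 1) x) / τ

/-- `(uⁿ)ₙ ⊆ V`, `(pⁿ)ₙ ⊆ Q` is a solution of the θ-scheme time discretization
of the Galerkin semi-discretization of the damped wave system:
for all `n ≥ 1`, `(∂̄uⁿ, v̄) − (p^{n,θ}, v̄′) + (a u^{n,θ}, v̄) = 0` for `v̄ ∈ V`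
and `(∂̄pⁿ, q̄) + ((u^{n,θ})′, q̄) = 0` for `q̄ ∈ Q`. -/
def IsThetaSolution (a : ℝ → ℝ) (V Q : Submodule ℝ (ℝ → ℝ)) (τ θ : ℝ)
    (u p : ℕ → ℝ → ℝ) : Prop :=
  (∀ n : ℕ, u n ∈ V ∧ p n ∈ Q) ∧
  ∀ n : ℕ, 1 ≤ n →
    (∀ v ∈ V, L2ip (bdiff τ u n) v - L2ip (thAvg θ p n) (deriv v)
        + L2ip (fun x => a x * thAvg θ u n x) v = 0) ∧
    (∀ q ∈ Q, L2ip (bdiff τ p n) q + L2ip (deriv (thAvg θ u n)) q = 0)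

lemma L2ip_comm (f g : ℝ → ℝ) : L2ip f g = L2ip g f := by
  simp [L2ip, mul_comm]

lemma key_identity (τ θ : ℝ) (hτ : τ ≠ 0) (A B : ℝ → ℝ)
    (hA : ContinuousOn A (Icc (0:ℝ) 1)) (hB : ContinuousOn B (Icc (0:ℝ) 1)) :
    (∫ x in (0:ℝ)..1, ((A x - B x) / τ) * (θ * A x + (1 - θ) * B x))
      = (1 / (2 * τ)) * (∫ x in (0:ℝ)..1, (A x) ^ 2)
        - (1 / (2 * τ)) * (∫ x in (0:ℝ)..1, (B x) ^ 2)
        + (θ - 1/2) * τ * (∫ x in (0:ℝ)..1, ((A x - B x) / τ) ^ 2) := by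
  have hUI : Icc (0:ℝ) 1 = uIcc (0:ℝ) 1 := (uIcc_of_le (by norm_num)).symm
  have hA' : ContinuousOn A (uIcc (0:ℝ) 1) := hUI ▸ hA
  have hB' : ContinuousOn B (uIcc (0:ℝ) 1) := hUI ▸ hB
  have iA : IntervalIntegrable (fun x => (1 / (2 * τ)) * (A x) ^ 2) volume 0 1 :=
    (continuousOn_const.mul (hA'.pow 2)).intervalIntegrable
  have iB : IntervalIntegrable (fun x => -((1 / (2 * τ)) * (B x) ^ 2)) volume 0 1 :=
    (continuousOn_const.mul (hB'.pow 2)).neg.intervalIntegrable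
  have iD : IntervalIntegrable (fun x => (θ - 1/2) * τ * ((A x - B x) / τ) ^ 2) volume 0 1 :=
    (continuousOn_const.mul (((hA'.sub hB').div_const τ).pow 2)).intervalIntegrable
  have hpt : ∀ x : ℝ, ((A x - B x) / τ) * (θ * A x + (1 - θ) * B x)
      = (1 / (2 * τ)) * (A x) ^ 2 + -((1 / (2 * τ)) * (B x) ^ 2)
        + (θ - 1/2) * τ * ((A x - B x) / τ) ^ 2 := by
    intro x; field_simp; ring
  rw [intervalIntegral.integral_congr (g := fun x => (1 / (2 * τ)) * (A x) ^ 2 + -((1 / (2 * τ)) * (B x) ^ 2) + (θ - 1/2) * τ * ((A x - B x) / τ) ^ 2) (fun x _ => hpt x),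
    intervalIntegral.integral_add (iA.add iB) iD, intervalIntegral.integral_add iA iB,
    intervalIntegral.integral_const_mul, intervalIntegral.integral_const_mul,
    intervalIntegral.integral_neg, intervalIntegral.integral_const_mul]
  ring

/-- Discrete energy identity for the θ-scheme:
`∂̄Eⁿ = −(θ−1/2)τ(‖∂̄uⁿ‖² + ‖∂̄pⁿ‖²) − ∫₀¹ a (u^{n,θ})² dx`. -/
theorem stmt15 (V Q : Submodule ℝ (ℝ → ℝ))
    (hVfd : FiniteDimensional ℝ ↥V) (hQfd : FiniteDimensional ℝ ↥Q)
    (hV : ∀ v ∈ V, ContDiffOn ℝ 1 v (Icc (0:ℝ) 1))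
    (hQ : ∀ q ∈ Q, ContinuousOn q (Icc (0:ℝ) 1))
    (a : ℝ → ℝ) (ha : ContinuousOn a (Icc (0:ℝ) 1))
    (τ θ : ℝ) (hτ : 0 < τ)
    (u p : ℕ → ℝ → ℝ) (hsol : IsThetaSolution a V Q τ θ u p) :
    ∀ n : ℕ, 1 ≤ n →
      ((1/2) * (L2nsq (u n) + L2nsq (p n))
          - (1/2) * (L2nsq (u (n-1)) + L2nsq (p (n-1)))) / τ
        = -(θ - 1/2) * τ * (L2nsq (bdiff τ u n) + L2nsq (bdiff τ p n))
          - ∫ x in (0:ℝ)..1, a x * (thAvg θ u n x) ^ 2 := by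
  intro n hn
  obtain ⟨hmem, heq⟩ := hsol
  have hτ' : τ ≠ 0 := ne_of_gt hτ
  -- membership of theta averages
  have hUmem : thAvg θ u n ∈ V := by
    have : thAvg θ u n = θ • u n + (1 - θ) • u (n-1) := by
      funext x; simp [thAvg, Pi.smul_apply, smul_eq_mul]
    rw [this]
    exact V.add_mem (V.smul_mem _ (hmem n).1) (V.smul_mem _ (hmem (n-1)).1)
  have hPmem : thAvg θ p n ∈ Q := by
    have : thAvg θ p n = θ • p n + (1 - θ) • p (n-1) := by
      funext x; simp [thAvg, Pi.smul_apply, smul_eq_mul]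
    rw [this]
    exact Q.add_mem (Q.smul_mem _ (hmem n).2) (Q.smul_mem _ (hmem (n-1)).2)
  have e1 := (heq n hn).1 (thAvg θ u n) hUmem
  have e2 := (heq n hn).2 (thAvg θ p n) hPmem
  -- cancel cross terms
  have hcross : L2ip (deriv (thAvg θ u n)) (thAvg θ p n)
      = L2ip (thAvg θ p n) (deriv (thAvg θ u n)) := L2ip_comm _ _
  -- continuity facts
  have hcu : ∀ m, ContinuousOn (u m) (Icc (0:ℝ) 1) := fun m => (hV _ (hmem m).1).continuousOn
  have hcp : ∀ m, ContinuousOn (p m) (Icc (0:ℝ) 1) := fun m => hQ _ (hmem m).2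
  have ku : L2ip (bdiff τ u n) (thAvg θ u n)
      = (1 / (2 * τ)) * L2nsq (u n) - (1 / (2 * τ)) * L2nsq (u (n-1))
        + (θ - 1/2) * τ * L2nsq (bdiff τ u n) := by
    simpa [L2ip, L2nsq, bdiff, thAvg] using
      key_identity τ θ hτ' (u n) (u (n-1)) (hcu n) (hcu (n-1))
  have kp : L2ip (bdiff τ p n) (thAvg θ p n)
      = (1 / (2 * τ)) * L2nsq (p n) - (1 / (2 * τ)) * L2nsq (p (n-1))
        + (θ - 1/2) * τ * L2nsq (bdiff τ p n) := by
    simpa [L2ip, L2nsq, bdiff, thAvg] using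
      key_identity τ θ hτ' (p n) (p (n-1)) (hcp n) (hcp (n-1))
  have hI : L2ip (fun x => a x * thAvg θ u n x) (thAvg θ u n)
      = ∫ x in (0:ℝ)..1, a x * (thAvg θ u n x) ^ 2 := by
    unfold L2ip
    exact intervalIntegral.integral_congr (fun x _ => by ring)
  rw [ku, hI] at e1
  rw [kp, hcross] at e2
  have lhs_eq : ((1/2) * (L2nsq (u n) + L2nsq (p n))
      - (1/2) * (L2nsq (u (n-1)) + L2nsq (p (n-1)))) / τ
      = 1 / (2 * τ) * L2nsq (u n) + 1 / (2 * τ) * L2nsq (p n)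
        - 1 / (2 * τ) * L2nsq (u (n-1)) - 1 / (2 * τ) * L2nsq (p (n-1)) := by
    field_simp; ring
  have rhs_eq : -(θ - 1/2) * τ * (L2nsq (bdiff τ u n) + L2nsq (bdiff τ p n))
      = -((θ - 1/2) * τ * L2nsq (bdiff τ u n)) - (θ - 1/2) * τ * L2nsq (bdiff τ p n) := by
    ring
  rw [lhs_eq, rhs_eq]
  linarith [e1, e2]
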